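/- arXiv:2308.02630 — 3 statements merged into one kernel-verified Lean document; each statement's English description precedes it below -/
import Mathlib

section
/- If ρ and σ are density matrices (positive semidefinite with unit trace) on a finite-dimensional Hilbert space, then the partial trace over the first factor of e^{-iδS}(ρ ⊗ σ)e^{iδS}, where S is the swap operator, equals σ − iδ[ρ, σ] + O(δ²); equivalently, the first-order term in δ of Tr₁[e^{-iδS}(ρ ⊗ σ)e^{iδS}] is −i[ρ, σ]. -/
open Matrix Complex
open scoped Kronecker ComplexOrder

attribute [local instance] Matrix.linftyOpNormedAddCommGroup Matrix.linftyOpNormedSpace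

/-- The swap (flip) operator on `H ⊗ H`, determined by `S (x ⊗ y) = y ⊗ x`. -/
def swapOp (n : ℕ) : Matrix (Fin n × Fin n) (Fin n × Fin n) ℂ :=
  Matrix.of fun p q => if p.1 = q.2 ∧ p.2 = q.1 then 1 else 0

/-- Partial trace over the first tensor factor. -/
noncomputable def ptr1 {n : ℕ} (M : Matrix (Fin n × Fin n) (Fin n × Fin n) ℂ) :
    Matrix (Fin n) (Fin n) ℂ :=
  Matrix.of fun j l => ∑ i, M (i, j) (i, l)

attribute [local instance] Matrix.linftyOpNormedRing Matrix.linftyOpNormedAlgebra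

lemma ptr1_swap_mul {n : ℕ} (M N : Matrix (Fin n) (Fin n) ℂ) :
    ptr1 (swapOp n * (M ⊗ₖ N)) = M * N := by
  ext j l
  simp only [ptr1, swapOp, Matrix.mul_apply, Matrix.of_apply, Matrix.kroneckerMap_apply,
    Fintype.sum_prod_type, ite_and]
  simp [Finset.sum_ite_eq, Finset.mul_sum, mul_comm]

lemma ptr1_mul_swap {n : ℕ} (M N : Matrix (Fin n) (Fin n) ℂ) :
    ptr1 ((M ⊗ₖ N) * swapOp n) = N * M := by
  ext j l
  simp only [ptr1, swapOp, Matrix.mul_apply, Matrix.of_apply, Matrix.kroneckerMap_apply,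
    Fintype.sum_prod_type, ite_and]
  simp [Finset.sum_ite_eq, Finset.mul_sum, mul_comm]

noncomputable def ptr1CLM (n : ℕ) :
    Matrix (Fin n × Fin n) (Fin n × Fin n) ℂ →L[ℂ] Matrix (Fin n) (Fin n) ℂ :=
  LinearMap.toContinuousLinearMap
    { toFun := ptr1
      map_add' := by intro x y; ext j l; simp [ptr1, Finset.sum_add_distrib]
      map_smul' := by intro c x; ext j l; simp [ptr1, Finset.mul_sum] }

/-- For density matrices `ρ, σ`, the derivative at `δ = 0` of
`δ ↦ Tr₁[e^{-iδS} (ρ ⊗ σ) e^{iδS}]` is `−i[ρ, σ]`; i.e.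
`Tr₁[e^{-iδS} (ρ ⊗ σ) e^{iδS}] = σ − iδ[ρ,σ] + O(δ²)`. -/
theorem deriv_ptr1_exp_swap_conj (n : ℕ) (ρ σ : Matrix (Fin n) (Fin n) ℂ)
    (hρ : ρ.PosSemidef) (hρtr : ρ.trace = 1)
    (hσ : σ.PosSemidef) (hσtr : σ.trace = 1) :
    HasDerivAt
      (fun δ : ℝ => ptr1 (NormedSpace.exp ((-(Complex.I * (δ : ℂ))) • swapOp n)
          * (ρ ⊗ₖ σ) * NormedSpace.exp ((Complex.I * (δ : ℂ)) • swapOp n)))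
      ((-Complex.I) • (ρ * σ - σ * ρ)) 0 := by
  set S := swapOp n
  set A := ρ ⊗ₖ σ
  set B := (-Complex.I) • S with hB
  set C := Complex.I • S with hC
  have h1 : HasDerivAt (fun z : ℂ => NormedSpace.exp (z • B)) B 0 := by
    have := hasDerivAt_exp_smul_const B (0 : ℂ)
    simp at this
    exact this
  have h2 : HasDerivAt (fun z : ℂ => NormedSpace.exp (z • C)) C 0 := by
    have := hasDerivAt_exp_smul_const C (0 : ℂ)
    simp at this
    exact this
  have hg : HasDerivAt
      (fun z : ℂ => NormedSpace.exp (z • B) * A * NormedSpace.exp (z • C))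
      (B * A + A * C) 0 := by
    have := (h1.mul_const A).mul h2
    simp at this
    exact this
  have hgr : HasDerivAt
      (fun δ : ℝ => NormedSpace.exp ((δ : ℂ) • B) * A * NormedSpace.exp ((δ : ℂ) • C))
      (B * A + A * C) 0 := by
    have hF : HasFDerivAt
        (fun z : ℂ => NormedSpace.exp (z • B) * A * NormedSpace.exp (z • C))
        (ContinuousLinearMap.smulRight (1 : ℂ →L[ℂ] ℂ) (B * A + A * C)) (((0:ℝ):ℂ)) := by
      rw [Complex.ofReal_zero]; exact hg.hasFDerivAt
    have hcomp := (hF.restrictScalars ℝ).comp (0:ℝ) Complex.ofRealCLM.hasFDerivAt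
    have := hcomp.hasDerivAt
    simp [Function.comp_def] at this
    exact this.congr_deriv (one_smul ℂ (B * A + A * C))
  have hfd := ((ptr1CLM n).restrictScalars ℝ).hasFDerivAt.comp_hasDerivAt 0 hgr
  have heq : (fun δ : ℝ => ptr1 (NormedSpace.exp ((-(Complex.I * (δ : ℂ))) • S)
          * A * NormedSpace.exp ((Complex.I * (δ : ℂ)) • S)))
      = (fun δ : ℝ => ((ptr1CLM n).restrictScalars ℝ)
          (NormedSpace.exp ((δ : ℂ) • B) * A * NormedSpace.exp ((δ : ℂ) • C))) := by
    funext δ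
    have e1 : (-(Complex.I * (δ : ℂ))) • S = (δ : ℂ) • B := by
      rw [hB, smul_smul]; ring_nf
    have e2 : (Complex.I * (δ : ℂ)) • S = (δ : ℂ) • C := by
      rw [hC, smul_smul]; ring_nf
    rw [e1, e2]; rfl
  have hval : ((ptr1CLM n).restrictScalars ℝ) (B * A + A * C)
      = (-Complex.I) • (ρ * σ - σ * ρ) := by
    have : (ptr1CLM n) (B * A + A * C) = (-Complex.I) • (ρ * σ - σ * ρ) := by
      rw [map_add, hB, hC, smul_mul_assoc, mul_smul_comm, _root_.map_smul, _root_.map_smul]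
      show (-Complex.I) • ptr1 (S * A) + Complex.I • ptr1 (A * S) = _
      rw [ptr1_swap_mul, ptr1_mul_swap]
      module
    exact this
  rw [heq, ← hval]
  exact hfd
end

section
/- Consider the ODE system ṗₙ = c(Eₙ − ε)pₙ with ε = Σₙ pₙEₙ, c < 0, pₙ(0) > 0, Σₙ pₙ(0) = 1, where E₁ is the unique minimum of the Eₙ. Then p₁(t) → 1 and pₙ(t) → 0 for n > 1 as t → ∞, i.e., the ground-state probability is an asymptotic fixed-point attractor. -/
open Filter Topology

/-- Grönwall: a solution of `g' = a·g` with `g 0 = 0` vanishes for `t ≥ 0`. -/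
lemma gronwall_zero_aux {g a : ℝ → ℝ} (hg : ∀ t, HasDerivAt g (a t * g t) t)
    (ha : Continuous a) (h0 : g 0 = 0) {b : ℝ} (hb : 0 ≤ b) : g b = 0 := by
  obtain ⟨K, hK⟩ := (isCompact_Icc (a := (0:ℝ)) (b := b)).exists_bound_of_continuousOn
    ha.continuousOn
  have hgc : Continuous g := continuous_iff_continuousAt.mpr fun t => (hg t).continuousAt
  have key := norm_le_gronwallBound_of_norm_deriv_right_le (f := g)
    (f' := fun t => a t * g t) (δ := 0) (K := K) (ε := 0) (a := 0) (b := b)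
    hgc.continuousOn (fun x _ => (hg x).hasDerivWithinAt)
    (by simp [h0]) ?_ b (by simp [hb])
  · rw [gronwallBound_ε0_δ0] at key
    simpa using key
  · intro x hx
    rw [add_zero, norm_mul]
    exact mul_le_mul_of_nonneg_right (hK x (Set.mem_Icc_of_Ico hx)) (norm_nonneg _)

/-- For the ODE system `ṗₙ = c(Eₙ − ε)pₙ` with `ε = Σₙ pₙEₙ`, `c < 0`, positive initial
data summing to 1, and `E₁` the unique minimum of the energies, the ground-state
probability `p₁(t) → 1` and `pₙ(t) → 0` for `n > 1` as `t → ∞`. -/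
theorem ground_state_attractor {d : ℕ} [NeZero d]
    (p : Fin d → ℝ → ℝ) (E : Fin d → ℝ) (c : ℝ) (hc : c < 0)
    (hE : ∀ n : Fin d, n ≠ 0 → E 0 < E n)
    (hpos0 : ∀ n, 0 < p n 0) (hsum0 : ∑ n, p n 0 = 1)
    (hode : ∀ n t, HasDerivAt (p n) (c * (E n - ∑ m, p m t * E m) * p n t) t) :
    Tendsto (p 0) atTop (𝓝 1) ∧ ∀ n : Fin d, n ≠ 0 → Tendsto (p n) atTop (𝓝 0) := by
  set eps : ℝ → ℝ := fun t => ∑ m, p m t * E m with heps_def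
  have hcont : ∀ n, Continuous (p n) :=
    fun n => continuous_iff_continuousAt.mpr fun t => (hode n t).continuousAt
  have heps : Continuous eps :=
    continuous_finset_sum _ fun m _ => (hcont m).mul continuous_const
  -- the total probability stays 1
  have hsum : ∀ t, 0 ≤ t → ∑ n, p n t = 1 := by
    intro t ht
    have h := gronwall_zero_aux (g := fun t => (∑ n, p n t) - 1)
      (a := fun t => -(c * eps t)) ?_ (by fun_prop) (by simp [hsum0]) ht
    · simpa [sub_eq_zero] using h
    · intro s
      have hd : HasDerivAt (fun t => (∑ n, p n t) - 1)
          (∑ n, c * (E n - eps s) * p n s) s :=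
        (HasDerivAt.fun_sum fun n _ => hode n s).sub_const 1
      convert hd using 1
      calc -(c * eps s) * ((∑ n, p n s) - 1)
          = c * (∑ n, p n s * E n) - (c * eps s) * ∑ n, p n s := by
            simp only [heps_def]; ring
        _ = ∑ n, (c * (p n s * E n) - (c * eps s) * p n s) := by
            rw [Finset.sum_sub_distrib, ← Finset.mul_sum, ← Finset.mul_sum]
        _ = ∑ n, c * (E n - eps s) * p n s := by
            apply Finset.sum_congr rfl; intros; ring
  -- the Wronskian identity
  have hratio : ∀ n : Fin d, ∀ t, 0 ≤ t →
      p n t * Real.exp (-(c * E n) * t) * p 0 0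
        = p 0 t * Real.exp (-(c * E 0) * t) * p n 0 := by
    intro n t ht
    have hu : ∀ m : Fin d, ∀ s : ℝ, HasDerivAt (fun t => p m t * Real.exp (-(c * E m) * t))
        (c * (E m - eps s) * p m s * Real.exp (-(c * E m) * s)
          + p m s * (Real.exp (-(c * E m) * s) * (-(c * E m)))) s := by
      intro m s
      have hk : HasDerivAt (fun x : ℝ => -(c * E m) * x) (-(c * E m)) s := by
        simpa using (hasDerivAt_id s).const_mul (-(c * E m))
      exact (hode m s).mul hk.exp
    have h := gronwall_zero_aux
      (g := fun t => p n t * Real.exp (-(c * E n) * t) * p 0 0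
          - p 0 t * Real.exp (-(c * E 0) * t) * p n 0)
      (a := fun t => -(c * eps t)) ?_ (by fun_prop) (by simp [mul_comm]) ht
    · simpa [sub_eq_zero] using h
    · intro s
      have hd := (((hu n s).mul_const (p 0 0)).fun_sub ((hu 0 s).mul_const (p n 0)))
      refine hd.congr_deriv ?_
      ring
  -- pointwise formula
  have hpt : ∀ n : Fin d, ∀ t, 0 ≤ t →
      p n t * p 0 0 = p 0 t * p n 0 * Real.exp (c * (E n - E 0) * t) := by
    intro n t ht
    have hxy := hratio n t ht
    have e1 : Real.exp (-(c * E n) * t) * Real.exp (c * E n * t) = 1 := by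
      rw [← Real.exp_add]; ring_nf; exact Real.exp_zero
    have e2 : Real.exp (-(c * E 0) * t) * Real.exp (c * E n * t)
        = Real.exp (c * (E n - E 0) * t) := by
      rw [← Real.exp_add]; ring_nf
    linear_combination Real.exp (c * E n * t) * hxy - p n t * p 0 0 * e1
      + p 0 t * p n 0 * e2
  set D : ℝ → ℝ := fun t => ∑ m, p m 0 * Real.exp (c * (E m - E 0) * t) with hD_def
  have hDpos : ∀ t, 0 < D t := by
    intro t
    exact Finset.sum_pos (fun m _ => mul_pos (hpos0 m) (Real.exp_pos _)) Finset.univ_nonempty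
  have hkey : ∀ t, 0 ≤ t → p 0 t * D t = p 0 0 := by
    intro t ht
    calc p 0 t * D t = ∑ m, p 0 t * p m 0 * Real.exp (c * (E m - E 0) * t) := by
          rw [hD_def, Finset.mul_sum]; apply Finset.sum_congr rfl; intros; ring
      _ = ∑ m, p m t * p 0 0 := by
          apply Finset.sum_congr rfl; intro m _; exact (hpt m t ht).symm
      _ = (∑ m, p m t) * p 0 0 := by rw [Finset.sum_mul]
      _ = p 0 0 := by rw [hsum t ht, one_mul]
  -- exponential limits
  have hexp : ∀ n : Fin d, n ≠ 0 →
      Tendsto (fun t => Real.exp (c * (E n - E 0) * t)) atTop (𝓝 0) := by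
    intro n hn
    have hk : c * (E n - E 0) < 0 :=
      mul_neg_of_neg_of_pos hc (by linarith [hE n hn])
    apply Real.tendsto_exp_atBot.comp
    exact Tendsto.const_mul_atTop_of_neg hk tendsto_id
  have hDlim : Tendsto D atTop (𝓝 (p 0 0)) := by
    have : Tendsto D atTop (𝓝 (∑ m : Fin d, if m = 0 then p 0 0 else 0)) := by
      apply tendsto_finset_sum
      intro m _
      by_cases hm : m = 0
      · subst hm
        simp only [if_pos rfl, sub_self, mul_zero, zero_mul, Real.exp_zero, mul_one]
        exact tendsto_const_nhds
      · rw [if_neg hm]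
        simpa using tendsto_const_nhds.mul (hexp m hm)
    simpa [Finset.sum_ite_eq'] using this
  have hp00 : p 0 0 ≠ 0 := (hpos0 0).ne'
  have h1 : Tendsto (p 0) atTop (𝓝 1) := by
    have hlim : Tendsto (fun t => p 0 0 / D t) atTop (𝓝 1) := by
      have := (tendsto_const_nhds (x := p 0 0)).div hDlim hp00
      simpa [div_self hp00, Pi.div_def] using this
    apply hlim.congr'
    filter_upwards [eventually_ge_atTop (0:ℝ)] with t ht
    rw [div_eq_iff (hDpos t).ne']
    exact (hkey t ht).symm
  refine ⟨h1, fun n hn => ?_⟩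
  have hlim : Tendsto (fun t => p 0 t * p n 0 * Real.exp (c * (E n - E 0) * t) / p 0 0)
      atTop (𝓝 0) := by
    have := ((h1.mul (tendsto_const_nhds (x := p n 0))).mul (hexp n hn)).div_const (p 0 0)
    simpa using this
  apply hlim.congr'
  filter_upwards [eventually_ge_atTop (0:ℝ)] with t ht
  rw [div_eq_iff hp00]
  exact (hpt n t ht).symm
end

section
/- Let H be a 2×2 Hermitian matrix and ρ_{t−a}, ρ_t be two pure-state density matrices (rank-one projections) on ℂ² with nonzero, non-unit overlap w² = Tr[ρ_{t−a}ρ_t] ∈ (0,1). Then H agrees with the operator λ₁ρ_{t−a} + λ₂ρ_t + iλ₃[ρ_{t−a},ρ_t] + λ₄{ρ_{t−a},ρ_t} for some real coefficients λ₁,…,λ₄, provided Tr[H] = λ₁ + λ₂ + 2w²λ₄ (i.e., the four operators ρ_{t−a}, ρ_t, i[ρ_{t−a},ρ_t], {ρ_{t−a},ρ_t} together with appropriate trace conditions span the real vector space of 2×2 Hermitian matrices whose trace is recovered). -/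
open Matrix Complex

private lemma sandwich (u v x y : Fin 2 → ℂ) (H : Matrix (Fin 2) (Fin 2) ℂ) :
    Matrix.vecMulVec u (star v) * H * Matrix.vecMulVec x (star y)
      = (star v ⬝ᵥ (H *ᵥ x)) • Matrix.vecMulVec u (star y) := by
  ext i j
  simp [Matrix.mul_apply, Matrix.vecMulVec_apply, Matrix.mulVec, dotProduct,
    Fin.sum_univ_two, Pi.star_apply]
  ring

private lemma outer_mul (u v x y : Fin 2 → ℂ) :
    Matrix.vecMulVec u (star v) * Matrix.vecMulVec x (star y)
      = (star v ⬝ᵥ x) • Matrix.vecMulVec u (star y) := by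
  ext i j
  simp [Matrix.mul_apply, Matrix.vecMulVec_apply, dotProduct, Fin.sum_univ_two,
    Pi.star_apply]
  ring

private lemma conj_dot (u v : Fin 2 → ℂ) :
    (starRingEnd ℂ) (star u ⬝ᵥ v) = star v ⬝ᵥ u := by
  simp [dotProduct, Fin.sum_univ_two, map_add, _root_.map_mul, Pi.star_apply,
    Complex.star_def, mul_comm]

private lemma conj_dotH (H : Matrix (Fin 2) (Fin 2) ℂ) (hH : H.IsHermitian)
    (u v : Fin 2 → ℂ) :
    (starRingEnd ℂ) (star u ⬝ᵥ (H *ᵥ v)) = star v ⬝ᵥ (H *ᵥ u) := by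
  have hH' : ∀ i j, (starRingEnd ℂ) (H i j) = H j i := fun i j => hH.apply j i
  simp only [dotProduct, Matrix.mulVec, Fin.sum_univ_two, Pi.star_apply, map_add,
    _root_.map_mul, Complex.star_def, Complex.conj_conj, hH']
  ring

private lemma trace_outer (u v : Fin 2 → ℂ) :
    (Matrix.vecMulVec u (star v)).trace = star v ⬝ᵥ u := by
  simp [Matrix.trace, Matrix.vecMulVec_apply, dotProduct, Fin.sum_univ_two,
    Matrix.diag, mul_comm]

private lemma resolution (ψ₁ ψ₂ : Fin 2 → ℂ)
    (h1 : star ψ₁ ⬝ᵥ ψ₁ = 1) (h2 : star ψ₂ ⬝ᵥ ψ₂ = 1) :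
    Matrix.vecMulVec ψ₁ (star ψ₁) + Matrix.vecMulVec ψ₂ (star ψ₂)
      - (star ψ₁ ⬝ᵥ ψ₂) • Matrix.vecMulVec ψ₁ (star ψ₂)
      - ((starRingEnd ℂ) (star ψ₁ ⬝ᵥ ψ₂)) • Matrix.vecMulVec ψ₂ (star ψ₁)
      = (1 - (star ψ₁ ⬝ᵥ ψ₂) * (starRingEnd ℂ) (star ψ₁ ⬝ᵥ ψ₂))
        • (1 : Matrix (Fin 2) (Fin 2) ℂ) := by
  simp only [dotProduct, Fin.sum_univ_two, Pi.star_apply, map_add, _root_.map_mul,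
    Complex.star_def] at *
  ext i j
  fin_cases i <;> fin_cases j <;>
    simp [Matrix.vecMulVec_apply, Matrix.one_apply, Complex.conj_conj, Complex.star_def]
  · linear_combination (1 - (starRingEnd ℂ) (ψ₂ 0) * ψ₂ 0) * h1
      + ((starRingEnd ℂ) (ψ₁ 1) * ψ₁ 1) * h2
  · linear_combination (-(ψ₂ 0 * (starRingEnd ℂ) (ψ₂ 1))) * h1
      + (-(ψ₁ 0 * (starRingEnd ℂ) (ψ₁ 1))) * h2
  · linear_combination (-((starRingEnd ℂ) (ψ₂ 0) * ψ₂ 1)) * h1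
      + (-((starRingEnd ℂ) (ψ₁ 0) * ψ₁ 1)) * h2
  · linear_combination (1 - (starRingEnd ℂ) (ψ₂ 1) * ψ₂ 1) * h1
      + ((starRingEnd ℂ) (ψ₁ 0) * ψ₁ 0) * h2

private lemma key (ψ₁ ψ₂ : Fin 2 → ℂ) (H : Matrix (Fin 2) (Fin 2) ℂ)
    (h1 : star ψ₁ ⬝ᵥ ψ₁ = 1) (h2 : star ψ₂ ⬝ᵥ ψ₂ = 1) :
    ((1 - (star ψ₁ ⬝ᵥ ψ₂) * (starRingEnd ℂ) (star ψ₁ ⬝ᵥ ψ₂)) ^ 2) • H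
      = (star ψ₁ ⬝ᵥ (H *ᵥ ψ₁) - (star ψ₁ ⬝ᵥ ψ₂) * (star ψ₂ ⬝ᵥ (H *ᵥ ψ₁))
          - (starRingEnd ℂ) (star ψ₁ ⬝ᵥ ψ₂) * (star ψ₁ ⬝ᵥ (H *ᵥ ψ₂))
          + (star ψ₁ ⬝ᵥ ψ₂) * (starRingEnd ℂ) (star ψ₁ ⬝ᵥ ψ₂) * (star ψ₂ ⬝ᵥ (H *ᵥ ψ₂)))
          • Matrix.vecMulVec ψ₁ (star ψ₁)
      + (star ψ₁ ⬝ᵥ (H *ᵥ ψ₂) - (star ψ₁ ⬝ᵥ ψ₂) * (star ψ₁ ⬝ᵥ (H *ᵥ ψ₁))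
          - (star ψ₁ ⬝ᵥ ψ₂) * (star ψ₂ ⬝ᵥ (H *ᵥ ψ₂))
          + (star ψ₁ ⬝ᵥ ψ₂) ^ 2 * (star ψ₂ ⬝ᵥ (H *ᵥ ψ₁)))
          • Matrix.vecMulVec ψ₁ (star ψ₂)
      + (star ψ₂ ⬝ᵥ (H *ᵥ ψ₁) - (starRingEnd ℂ) (star ψ₁ ⬝ᵥ ψ₂) * (star ψ₁ ⬝ᵥ (H *ᵥ ψ₁))
          - (starRingEnd ℂ) (star ψ₁ ⬝ᵥ ψ₂) * (star ψ₂ ⬝ᵥ (H *ᵥ ψ₂))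
          + ((starRingEnd ℂ) (star ψ₁ ⬝ᵥ ψ₂)) ^ 2 * (star ψ₁ ⬝ᵥ (H *ᵥ ψ₂)))
          • Matrix.vecMulVec ψ₂ (star ψ₁)
      + (star ψ₂ ⬝ᵥ (H *ᵥ ψ₂) - (star ψ₁ ⬝ᵥ ψ₂) * (star ψ₂ ⬝ᵥ (H *ᵥ ψ₁))
          - (starRingEnd ℂ) (star ψ₁ ⬝ᵥ ψ₂) * (star ψ₁ ⬝ᵥ (H *ᵥ ψ₂))
          + (star ψ₁ ⬝ᵥ ψ₂) * (starRingEnd ℂ) (star ψ₁ ⬝ᵥ ψ₂) * (star ψ₁ ⬝ᵥ (H *ᵥ ψ₁)))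
          • Matrix.vecMulVec ψ₂ (star ψ₂) := by
  have hR := resolution ψ₁ ψ₂ h1 h2
  have step : ((1 - (star ψ₁ ⬝ᵥ ψ₂) * (starRingEnd ℂ) (star ψ₁ ⬝ᵥ ψ₂))
        • (1 : Matrix (Fin 2) (Fin 2) ℂ)) * H
        * ((1 - (star ψ₁ ⬝ᵥ ψ₂) * (starRingEnd ℂ) (star ψ₁ ⬝ᵥ ψ₂)) • 1)
      = ((1 - (star ψ₁ ⬝ᵥ ψ₂) * (starRingEnd ℂ) (star ψ₁ ⬝ᵥ ψ₂)) ^ 2) • H := by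
    rw [smul_mul_assoc, mul_smul_comm, Matrix.one_mul, Matrix.mul_one, smul_smul, sq]
  rw [← step, ← hR]
  simp only [sub_mul, add_mul, mul_sub, mul_add, smul_mul_assoc, mul_smul_comm,
    sandwich, smul_smul]
  module

/-- Every 2×2 Hermitian matrix `H` lies in the real span of
`{ρ₁, ρ₂, i[ρ₁,ρ₂], {ρ₁,ρ₂}}` for two pure-state projections `ρ₁ = |ψ₁⟩⟨ψ₁|`,
`ρ₂ = |ψ₂⟩⟨ψ₂|` with overlap `w = |⟨ψ₁,ψ₂⟩| ∈ (0,1)`; moreover the trace of `H`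
is recovered as `Tr[H] = λ₁ + λ₂ + 2w²λ₄`. -/
theorem hermitian_in_span_of_pure_states (ψ₁ ψ₂ : Fin 2 → ℂ)
    (h1 : star ψ₁ ⬝ᵥ ψ₁ = 1) (h2 : star ψ₂ ⬝ᵥ ψ₂ = 1)
    (hov_pos : 0 < ‖star ψ₁ ⬝ᵥ ψ₂‖)
    (hov_lt : ‖star ψ₁ ⬝ᵥ ψ₂‖ < 1)
    (H : Matrix (Fin 2) (Fin 2) ℂ) (hH : H.IsHermitian) :
    let ρ₁ := Matrix.vecMulVec ψ₁ (star ψ₁)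
    let ρ₂ := Matrix.vecMulVec ψ₂ (star ψ₂)
    ∃ l₁ l₂ l₃ l₄ : ℝ,
      H = (l₁ : ℂ) • ρ₁ + (l₂ : ℂ) • ρ₂
          + (Complex.I * (l₃ : ℂ)) • (ρ₁ * ρ₂ - ρ₂ * ρ₁)
          + (l₄ : ℂ) • (ρ₁ * ρ₂ + ρ₂ * ρ₁) ∧
      H.trace = ((l₁ + l₂ + 2 * ‖star ψ₁ ⬝ᵥ ψ₂‖ ^ 2 * l₄ : ℝ) : ℂ) := by
  intro ρ₁ ρ₂
  -- abbreviations (purely notational, via generalized names below)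
  have hC0 : star ψ₁ ⬝ᵥ ψ₂ ≠ 0 := by
    intro h
    rw [h] at hov_pos
    simp at hov_pos
  have hw : ((‖star ψ₁ ⬝ᵥ ψ₂‖ : ℝ) : ℂ) ^ 2
      = (star ψ₁ ⬝ᵥ ψ₂) * (starRingEnd ℂ) (star ψ₁ ⬝ᵥ ψ₂) := by
    rw [← Complex.ofReal_pow, Complex.sq_norm, ← Complex.mul_conj]
  have hδ : (1 : ℂ) - (star ψ₁ ⬝ᵥ ψ₂) * (starRingEnd ℂ) (star ψ₁ ⬝ᵥ ψ₂) ≠ 0 := by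
    rw [← hw]
    intro h
    have h' : ((‖star ψ₁ ⬝ᵥ ψ₂‖ : ℝ) : ℂ) ^ 2 = 1 := by linear_combination -h
    have : (‖star ψ₁ ⬝ᵥ ψ₂‖) ^ 2 = 1 := by exact_mod_cast h'
    nlinarith
  have hδ2 : ((1 : ℂ) - (star ψ₁ ⬝ᵥ ψ₂) * (starRingEnd ℂ) (star ψ₁ ⬝ᵥ ψ₂)) ^ 2 ≠ 0 :=
    pow_ne_zero _ hδ
  have he11 : (starRingEnd ℂ) (star ψ₁ ⬝ᵥ (H *ᵥ ψ₁)) = star ψ₁ ⬝ᵥ (H *ᵥ ψ₁) :=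
    conj_dotH H hH ψ₁ ψ₁
  have he22 : (starRingEnd ℂ) (star ψ₂ ⬝ᵥ (H *ᵥ ψ₂)) = star ψ₂ ⬝ᵥ (H *ᵥ ψ₂) :=
    conj_dotH H hH ψ₂ ψ₂
  have he12 : (starRingEnd ℂ) (star ψ₁ ⬝ᵥ (H *ᵥ ψ₂)) = star ψ₂ ⬝ᵥ (H *ᵥ ψ₁) :=
    conj_dotH H hH ψ₁ ψ₂
  have he21 : (starRingEnd ℂ) (star ψ₂ ⬝ᵥ (H *ᵥ ψ₁)) = star ψ₁ ⬝ᵥ (H *ᵥ ψ₂) :=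
    conj_dotH H hH ψ₂ ψ₁
  -- notation
  set C := star ψ₁ ⬝ᵥ ψ₂ with hCdef
  set e11 := star ψ₁ ⬝ᵥ (H *ᵥ ψ₁) with he11def
  set e12 := star ψ₁ ⬝ᵥ (H *ᵥ ψ₂) with he12def
  set e21 := star ψ₂ ⬝ᵥ (H *ᵥ ψ₁) with he21def
  set e22 := star ψ₂ ⬝ᵥ (H *ᵥ ψ₂) with he22def
  set δ := (1 : ℂ) - C * (starRingEnd ℂ) C with hδdef
  set B11 := e11 - C * e21 - (starRingEnd ℂ) C * e12 + C * (starRingEnd ℂ) C * e22 with hB11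
  set B12 := e12 - C * e11 - C * e22 + C ^ 2 * e21 with hB12
  set B21 := e21 - (starRingEnd ℂ) C * e11 - (starRingEnd ℂ) C * e22
      + ((starRingEnd ℂ) C) ^ 2 * e12 with hB21
  set B22 := e22 - C * e21 - (starRingEnd ℂ) C * e12 + C * (starRingEnd ℂ) C * e11 with hB22
  have hδconj : (starRingEnd ℂ) δ = δ := by
    rw [hδdef]
    simp only [map_sub, _root_.map_one, _root_.map_mul, Complex.conj_conj]
    ring
  have hB11conj : (starRingEnd ℂ) B11 = B11 := by
    rw [hB11]
    simp only [map_add, map_sub, _root_.map_mul, map_pow, he11, he12, he21, he22,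
      Complex.conj_conj]
    ring
  have hB22conj : (starRingEnd ℂ) B22 = B22 := by
    rw [hB22]
    simp only [map_add, map_sub, _root_.map_mul, map_pow, he11, he12, he21, he22,
      Complex.conj_conj]
    ring
  have hB12conj : (starRingEnd ℂ) B12 = B21 := by
    rw [hB12, hB21]
    simp only [map_add, map_sub, _root_.map_mul, map_pow, he11, he12, he21, he22,
      Complex.conj_conj]
  -- the four real coefficients
  obtain ⟨l₁, hl₁⟩ : ∃ r : ℝ, (r : ℂ) * δ ^ 2 = B11 := by
    refine ⟨(B11 / δ ^ 2).re, ?_⟩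
    have : ((B11 / δ ^ 2).re : ℂ) = B11 / δ ^ 2 := by
      rw [← Complex.conj_eq_iff_re, map_div₀, map_pow, hδconj, hB11conj]
    rw [this]
    field_simp
  obtain ⟨l₂, hl₂⟩ : ∃ r : ℝ, (r : ℂ) * δ ^ 2 = B22 := by
    refine ⟨(B22 / δ ^ 2).re, ?_⟩
    have : ((B22 / δ ^ 2).re : ℂ) = B22 / δ ^ 2 := by
      rw [← Complex.conj_eq_iff_re, map_div₀, map_pow, hδconj, hB22conj]
    rw [this]
    field_simp
  obtain ⟨l₃, l₄, hl₃₄, hl₃₄'⟩ : ∃ a b : ℝ,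
      C * ((b : ℂ) + Complex.I * a) * δ ^ 2 = B12 ∧
      (starRingEnd ℂ) C * ((b : ℂ) - Complex.I * a) * δ ^ 2 = B21 := by
    refine ⟨(B12 / (δ ^ 2 * C)).im, (B12 / (δ ^ 2 * C)).re, ?_, ?_⟩
    · have hz := Complex.re_add_im (B12 / (δ ^ 2 * C))
      have : (((B12 / (δ ^ 2 * C)).re : ℂ) + Complex.I * (B12 / (δ ^ 2 * C)).im)
          = B12 / (δ ^ 2 * C) := by linear_combination hz
      rw [this]
      field_simp
    · have hz : (((B12 / (δ ^ 2 * C)).re : ℂ) - Complex.I * (B12 / (δ ^ 2 * C)).im)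
          = (starRingEnd ℂ) (B12 / (δ ^ 2 * C)) := by
        have := Complex.re_add_im (B12 / (δ ^ 2 * C))
        rw [← this]
        simp only [map_add, _root_.map_mul, Complex.conj_I, Complex.conj_ofReal]
        push_cast
        simp
        ring
      rw [hz, map_div₀, _root_.map_mul, map_pow, hδconj, hB12conj]
      have hC0' : (starRingEnd ℂ) C ≠ 0 := by
        simp only [ne_eq, map_eq_zero]
        exact hC0
      field_simp [hC0']
  -- cancellation helper
  have hcancel : ∀ A B : Matrix (Fin 2) (Fin 2) ℂ, δ ^ 2 • A = δ ^ 2 • B → A = B := by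
    intro A B h
    ext i j
    have := congrFun (congrFun h i) j
    simp only [Matrix.smul_apply, smul_eq_mul] at this
    exact mul_left_cancel₀ hδ2 this
  have hmain : H = (l₁ : ℂ) • ρ₁ + (l₂ : ℂ) • ρ₂
      + (Complex.I * (l₃ : ℂ)) • (ρ₁ * ρ₂ - ρ₂ * ρ₁)
      + (l₄ : ℂ) • (ρ₁ * ρ₂ + ρ₂ * ρ₁) := by
    show H = (l₁ : ℂ) • Matrix.vecMulVec ψ₁ (star ψ₁) + (l₂ : ℂ) • Matrix.vecMulVec ψ₂ (star ψ₂)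
      + (Complex.I * (l₃ : ℂ)) • (Matrix.vecMulVec ψ₁ (star ψ₁) * Matrix.vecMulVec ψ₂ (star ψ₂)
          - Matrix.vecMulVec ψ₂ (star ψ₂) * Matrix.vecMulVec ψ₁ (star ψ₁))
      + (l₄ : ℂ) • (Matrix.vecMulVec ψ₁ (star ψ₁) * Matrix.vecMulVec ψ₂ (star ψ₂)
          + Matrix.vecMulVec ψ₂ (star ψ₂) * Matrix.vecMulVec ψ₁ (star ψ₁))
    rw [outer_mul ψ₁ ψ₁ ψ₂ ψ₂, outer_mul ψ₂ ψ₂ ψ₁ ψ₁, ← conj_dot ψ₁ ψ₂]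
    apply hcancel
    have hkey := key ψ₁ ψ₂ H h1 h2
    rw [← hCdef, ← he11def, ← he12def, ← he21def, ← he22def, ← hδdef,
      ← hB11, ← hB12, ← hB21, ← hB22] at hkey
    rw [hkey]
    match_scalars
    · linear_combination -hl₁
    · linear_combination -hl₃₄
    · linear_combination -hl₃₄'
    · linear_combination -hl₂
  refine ⟨l₁, l₂, l₃, l₄, hmain, ?_⟩
  rw [hmain]
  show ((l₁ : ℂ) • Matrix.vecMulVec ψ₁ (star ψ₁) + (l₂ : ℂ) • Matrix.vecMulVec ψ₂ (star ψ₂)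
      + (Complex.I * (l₃ : ℂ)) • (Matrix.vecMulVec ψ₁ (star ψ₁) * Matrix.vecMulVec ψ₂ (star ψ₂)
          - Matrix.vecMulVec ψ₂ (star ψ₂) * Matrix.vecMulVec ψ₁ (star ψ₁))
      + (l₄ : ℂ) • (Matrix.vecMulVec ψ₁ (star ψ₁) * Matrix.vecMulVec ψ₂ (star ψ₂)
          + Matrix.vecMulVec ψ₂ (star ψ₂) * Matrix.vecMulVec ψ₁ (star ψ₁))).trace = _
  rw [outer_mul ψ₁ ψ₁ ψ₂ ψ₂, outer_mul ψ₂ ψ₂ ψ₁ ψ₁, ← conj_dot ψ₁ ψ₂]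
  simp only [Matrix.trace_add, Matrix.trace_sub, Matrix.trace_smul, trace_outer,
    smul_eq_mul]
  rw [← hCdef, h1, h2, ← conj_dot ψ₁ ψ₂, ← hCdef]
  push_cast
  rw [hw]
  ring
end
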